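/- Let N > 5040 be an integer and p a prime with p ≥ N not dividing N. Then G(N) > G(Np). -/

import Mathlib

/-- `G n = σ(n) / (n * log log n)`. -/
noncomputable def G (n : ℕ) : ℝ :=
  (∑ d ∈ n.divisors, (d : ℝ)) / (n * Real.log (Real.log n))

/-!
Since `p ∤ N`, multiplicativity of `σ` gives `σ(Np) = (p + 1) σ(N)`, so `G(N) > G(Np)` amounts to
`(p + 1) log log N < p log log (Np)`. As `p ≥ N`, `log (Np) ≥ 2 log N`, whence
`p log log (Np) ≥ p log 2 + p log log N`, and `p log 2 > log p ≥ log N > log log N`.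
-/

open Real

lemma Nat.sum_divisors_mul_prime {N p : ℕ} (hp : p.Prime) (hpN : ¬ p ∣ N) :
    ∑ d ∈ (N * p).divisors, (d : ℝ) = (∑ d ∈ N.divisors, (d : ℝ)) * ((p : ℝ) + 1) := by
  have hcop : N.Coprime p := (hp.coprime_iff_not_dvd.mpr hpN).symm
  have h := hcop.sum_divisors_mul
  rw [hp.sum_divisors] at h
  simpa using congrArg (Nat.cast (R := ℝ)) h

lemma Real.log_two_add_log_log_le_log_log_mul {x y : ℝ} (hx : 1 < x) (hxy : x ≤ y) :
    log 2 + log (log x) ≤ log (log (x * y)) := by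
  have hlogx : 0 < log x := log_pos hx
  have hlog_mul : 2 * log x ≤ log (x * y) := by
    rw [log_mul (by positivity) (by linarith)]
    linarith [log_le_log (by positivity) hxy]
  calc log 2 + log (log x) = log (2 * log x) := (log_mul two_ne_zero hlogx.ne').symm
    _ ≤ log (log (x * y)) := log_le_log (by positivity) hlog_mul

lemma Real.log_log_lt_mul_log_two {x : ℝ} {p : ℕ} (hx : 1 < x) (hxp : x ≤ p) :
    log (log x) < p * log 2 := by
  have hp : (0 : ℝ) < p := by linarith
  calc log (log x) < log x := by linarith [log_le_sub_one_of_pos (log_pos hx)]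
    _ ≤ log p := log_le_log (by linarith) hxp
    _ < log (2 ^ p) := log_lt_log hp (by exact_mod_cast p.lt_two_pow_self)
    _ = p * log 2 := by rw [log_pow]

lemma Real.add_one_mul_log_log_lt_mul_log_log_mul {x : ℝ} {p : ℕ} (hx : 1 < x) (hxp : x ≤ p) :
    (p + 1) * log (log x) < p * log (log (x * p)) := by
  have hp : (0 : ℝ) ≤ p := p.cast_nonneg
  nlinarith [log_two_add_log_log_le_log_log_mul hx hxp, log_log_lt_mul_log_two hx hxp]

theorem stmt_11 (N p : ℕ) (hN : N > 5040) (hp : p.Prime) (hge : p ≥ N)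
    (hpN : ¬ p ∣ N) : G N > G (N * p) := by
  have hN_gt : exp 1 < N := by
    have : (5040 : ℝ) < N := by exact_mod_cast hN
    linarith [exp_one_lt_d9]
  have hlogN : 1 < log N := (lt_log_iff_exp_lt (by positivity)).mpr hN_gt
  have hkey := add_one_mul_log_log_lt_mul_log_log_mul (by linarith [add_one_le_exp 1])
    (show (N : ℝ) ≤ p by exact_mod_cast hge)
  have hσ : 0 < ∑ d ∈ N.divisors, (d : ℝ) :=
    Finset.sum_pos (fun d hd ↦ by exact_mod_cast Nat.pos_of_mem_divisors hd)
      ⟨N, Nat.mem_divisors_self N (by omega)⟩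
  have hNp : (0 : ℝ) < N * p := by
    have : 0 < N * p := Nat.mul_pos (by omega) hp.pos
    exact_mod_cast this
  have hL1 : 0 < log (log N) := log_pos hlogN
  have hL2 : 0 < log (log (N * p)) := by nlinarith
  unfold G
  rw [Nat.sum_divisors_mul_prime hp hpN, gt_iff_lt, Nat.cast_mul,
    div_lt_div_iff₀ (by positivity) (by positivity)]
  linear_combination (∑ d ∈ N.divisors, (d : ℝ)) * N * hkey
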